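/- Let ℓ be a rational prime, let R ∈ K^× not be a root of unity, let ζ ∈ K^× be a primitive ℓ-th root of unity, and fix h ∈ ℕ. Set P = (R^{ℓ^h}, ζ) and Q = (R, 1) in (K^×)^2. Then: (a) for every rational prime p and all but finitely many primes 𝔭 of K, if p does not divide the order of (P mod 𝔭) then p does not divide the order of (Q mod 𝔭); and (b) for every A ∈ M_2(ℤ) and every integer c, if A·P = Q^c coordinatewise (that is, R^{ℓ^h A_{11}} ζ^{A_{12}} = R^c and R^{ℓ^h A_{21}} ζ^{A_{22}} = 1), then ℓ^h divides c. -/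

import Mathlib

open NumberField

/-- `x ≡ 1 (mod 𝔭)` for `x ∈ K`: there is a representation `x = a/b` with `a, b`
integral, `b ∉ 𝔭` and `a ≡ b (mod 𝔭)`. -/
def RedOne (K : Type*) [Field K] [NumberField K] (𝔭 : Ideal (𝓞 K)) (x : K) : Prop :=
  ∃ a b : 𝓞 K, b ∉ 𝔭 ∧ (algebraMap (𝓞 K) K b) * x = algebraMap (𝓞 K) K a ∧ a - b ∈ 𝔭

/-- The order of the reduction of `P ∈ (K^×)^n` modulo `𝔭`: the least `k > 0` such that
every coordinate of `P^k` reduces to `1` modulo `𝔭` (junk value `0` at the finitely many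
bad primes, where no such `k` exists). -/
noncomputable def redOrder (K : Type*) [Field K] [NumberField K] {n : ℕ}
    (𝔭 : Ideal (𝓞 K)) (P : Fin n → Kˣ) : ℕ :=
  sInf {k | 0 < k ∧ ∀ i, RedOne K 𝔭 ((P i : K) ^ k)}

/-!
At a prime `𝔭` not containing `ζ - 1`, `redOrder` is the order in `Kˣ ⧸ {x ≡ 1 mod 𝔭}`, where
`ζ` has order exactly `ℓ`. Hence `ord P = lcm (ord R^{ℓ^h}) ℓ` and `ord Q = ord R`. A prime
`p ∣ ord R` either equals `ℓ`, or divides `ord R^{ℓ^h}` because `ord R ∣ ℓ^h · ord R^{ℓ^h}`.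
For (b), the first coordinate gives `ζ^{A₁₂} = R^{c - ℓ^h A₁₁}`; the left side has finite order
and `R` does not, so `c = ℓ^h A₁₁`.
-/

theorem IsOfFinOrder.of_zpow {G : Type*} [Group G] {x : G} {k : ℤ}
    (h : IsOfFinOrder (x ^ k)) (hk : k ≠ 0) : IsOfFinOrder x := by
  obtain ⟨m, hm, hxm⟩ := isOfFinOrder_iff_zpow_eq_one.1 h
  exact isOfFinOrder_iff_zpow_eq_one.2 ⟨k * m, mul_ne_zero hk hm, by rwa [zpow_mul]⟩

theorem prime_dvd_orderOf_pow {G : Type*} [Monoid G] {x : G} {p n : ℕ} (hp : p.Prime)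
    (hx : p ∣ orderOf x) (hn : ¬ p ∣ n) : p ∣ orderOf (x ^ n) := by
  have : orderOf x ∣ n * orderOf (x ^ n) :=
    orderOf_dvd_of_pow_eq_one (by rw [pow_mul, pow_orderOf_eq_one])
  exact (hp.dvd_mul.1 (hx.trans this)).resolve_left hn

theorem prime_dvd_lcm_orderOf_pow_prime_pow {G : Type*} [Monoid G] {x z : G} {p ℓ : ℕ}
    (hp : p.Prime) (hℓ : ℓ.Prime) (h : ℕ) (hz : orderOf z = ℓ) (hx : p ∣ orderOf x) :
    p ∣ Nat.lcm (orderOf (x ^ ℓ ^ h)) (orderOf z) := by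
  rcases eq_or_ne p ℓ with rfl | hpℓ
  · exact hz ▸ Nat.dvd_lcm_right _ _
  · have hpℓh : ¬ p ∣ ℓ ^ h := fun hdvd =>
      hpℓ ((Nat.prime_dvd_prime_iff_eq hp hℓ).1 (hp.dvd_of_dvd_pow hdvd))
    exact (prime_dvd_orderOf_pow hp hx hpℓh).trans (Nat.dvd_lcm_left _ _)

theorem natCast_dvd_of_pow_zpow_mul_zpow_eq_zpow {G : Type*} [Group G] {x y : G}
    (hx : ¬ IsOfFinOrder x) (hy : IsOfFinOrder y) {n : ℕ} {a b c : ℤ}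
    (h : (x ^ n) ^ a * y ^ b = x ^ c) : (n : ℤ) ∣ c := by
  have hyb : y ^ b = x ^ (-(n * a) + c) := by
    rw [zpow_add, zpow_neg, zpow_mul, zpow_natCast, ← h, inv_mul_cancel_left]
  have : -(n * a) + c = 0 := by
    by_contra hne
    exact hx ((hyb ▸ hy.zpow).of_zpow hne)
  exact ⟨a, by linarith⟩

section Reduction

variable {K : Type*} [Field K] [NumberField K] (𝔭 : Ideal (𝓞 K)) [𝔭.IsPrime]

def redOneSubgroup : Subgroup Kˣ where
  carrier := {x | RedOne K 𝔭 (x : K)}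
  one_mem' := ⟨1, 1, (Ideal.ne_top_iff_one 𝔭).1 Ideal.IsPrime.ne_top', by simp, by simp⟩
  mul_mem' := by
    rintro x y ⟨a, b, hb, hab, habp⟩ ⟨c, d, hd, hcd, hcdp⟩
    refine ⟨a * c, b * d, Ideal.IsPrime.mul_notMem ‹_› hb hd, ?_, ?_⟩
    · simp only [map_mul, Units.val_mul, ← hab, ← hcd]
      ring
    · rw [show a * c - b * d = (a - b) * c + b * (c - d) by ring]
      exact 𝔭.add_mem (𝔭.mul_mem_right _ habp) (𝔭.mul_mem_left _ hcdp)
  inv_mem' := by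
    rintro x ⟨a, b, hb, hab, habp⟩
    have ha : a ∉ 𝔭 := fun ha => hb (by simpa using 𝔭.sub_mem ha habp)
    refine ⟨b, a, ha, ?_, by simpa using 𝔭.neg_mem habp⟩
    rw [← hab, Units.val_inv_eq_inv_val, mul_inv_cancel_right₀ x.ne_zero]

variable {𝔭}

theorem RedOne.sub_one_mem {x : 𝓞 K} (hx : RedOne K 𝔭 (algebraMap (𝓞 K) K x)) :
    x - 1 ∈ 𝔭 := by
  obtain ⟨a, b, hb, hab, habp⟩ := hx
  have ha : a = b * x := FaithfulSMul.algebraMap_injective (𝓞 K) K (by simp [← hab])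
  rw [ha, show b * x - b = b * (x - 1) by ring] at habp
  exact (Ideal.IsPrime.mem_or_mem ‹_› habp).resolve_left hb

theorem redOne_pow_iff_orderOf_dvd (x : Kˣ) (k : ℕ) :
    RedOne K 𝔭 ((x : K) ^ k) ↔ orderOf (x : Kˣ ⧸ redOneSubgroup 𝔭) ∣ k := by
  rw [orderOf_dvd_iff_pow_eq_one, ← QuotientGroup.mk_pow, QuotientGroup.eq_one_iff]
  exact Iff.rfl

theorem redOrder_eq_orderOf {n : ℕ} (P : Fin n → Kˣ) :
    redOrder K 𝔭 P = orderOf fun i => (P i : Kˣ ⧸ redOneSubgroup 𝔭) := by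
  simp only [redOrder, Pi.orderOf_eq_sInf, redOne_pow_iff_orderOf_dvd, gt_iff_lt]

theorem redOrder_pair (x y : Kˣ) :
    redOrder K 𝔭 ![x, y] =
      Nat.lcm (orderOf (x : Kˣ ⧸ redOneSubgroup 𝔭)) (orderOf (y : Kˣ ⧸ redOneSubgroup 𝔭)) := by
  rw [redOrder_eq_orderOf, Pi.orderOf, show (Finset.univ : Finset (Fin 2)) = {0, 1} by rfl,
    Finset.lcm_insert, Finset.lcm_singleton, normalize_eq]
  rfl

theorem orderOf_mk_redOneSubgroup_eq_prime {ζ : Kˣ} {ℓ : ℕ} (hℓ : ℓ.Prime) (hζ : ζ ^ ℓ = 1)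
    {z : 𝓞 K} (hz : algebraMap (𝓞 K) K z = ζ) (hz𝔭 : z - 1 ∉ 𝔭) :
    orderOf (ζ : Kˣ ⧸ redOneSubgroup 𝔭) = ℓ := by
  have : Fact ℓ.Prime := ⟨hℓ⟩
  refine orderOf_eq_prime (by rw [← QuotientGroup.mk_pow, hζ, QuotientGroup.mk_one]) ?_
  rw [Ne, QuotientGroup.eq_one_iff]
  exact fun hζ𝔭 => hz𝔭 (RedOne.sub_one_mem (hz ▸ hζ𝔭))

end Reduction

/-- Example 12 in the multiplicative-group case: `P = (R^{ℓ^h}, ζ)` and `Q = (R, 1)`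
satisfy condition (RSP) for the set of all rational primes, yet every admissible
constant `c` is divisible by `ℓ^h`. -/
theorem rsp_example_unbounded_valuation
    {K : Type*} [Field K] [NumberField K]
    (ℓ : ℕ) (hℓ : ℓ.Prime) (R : Kˣ) (hR : ¬ IsOfFinOrder R)
    (ζ : Kˣ) (hζ : IsPrimitiveRoot ζ ℓ) (h : ℕ)
    (P Q : Fin 2 → Kˣ) (hP : P = ![R ^ (ℓ ^ h), ζ]) (hQ : Q = ![R, 1]) :
    (∀ p : ℕ, p.Prime →
      ∃ T : Finset (Ideal (𝓞 K)), ∀ 𝔭 : Ideal (𝓞 K), 𝔭.IsMaximal → 𝔭 ∉ T →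
        ¬ p ∣ redOrder K 𝔭 P → ¬ p ∣ redOrder K 𝔭 Q) ∧
    (∀ (A : Matrix (Fin 2) (Fin 2) ℤ) (c : ℤ),
      (∀ j, (∏ i, P i ^ A j i) = Q j ^ c) → (ℓ : ℤ) ^ h ∣ c) := by
  subst hP hQ
  have hζK : IsPrimitiveRoot (ζ : K) ℓ := IsPrimitiveRoot.coe_units_iff.2 hζ
  let z : 𝓞 K := ⟨ζ, hζK.isIntegral hℓ.pos⟩
  have hz : z - 1 ≠ 0 := sub_ne_zero.2 fun hz1 =>
    hζK.ne_one hℓ.one_lt (congrArg ((↑) : 𝓞 K → K) hz1)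
  refine ⟨fun p hp => ⟨(Ring.HasFiniteQuotients.finite_setOfPred_mem _ hz).toFinset,
    fun 𝔭 _ h𝔭 hpP hpQ => hpP ?_⟩, fun A c hA => ?_⟩
  · rw [Set.Finite.mem_toFinset] at h𝔭
    have hζ𝔭 := orderOf_mk_redOneSubgroup_eq_prime hℓ hζ.pow_eq_one rfl h𝔭
    rw [redOrder_pair, QuotientGroup.mk_one, orderOf_one, Nat.lcm_one_right] at hpQ
    rw [redOrder_pair, QuotientGroup.mk_pow]
    exact prime_dvd_lcm_orderOf_pow_prime_pow hp hℓ h hζ𝔭 hpQ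
  · have hA0 := hA 0
    simp only [Fin.prod_univ_two, Matrix.cons_val_zero, Matrix.cons_val_one] at hA0
    exact_mod_cast natCast_dvd_of_pow_zpow_mul_zpow_eq_zpow hR (hζ.isOfFinOrder hℓ.ne_zero) hA0
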